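/- Every 2-almost-mixed free graph is a cograph (P4-free), and hence perfect; in particular, 2-almost-mixed free graphs satisfy χ = ω. -/

import Mathlib

def ZoneHorizontal {m n : ℕ} (M : Matrix (Fin m) (Fin n) (Fin 3))
    (R : Fin m → Prop) (C : Fin n → Prop) : Prop :=
  ∀ i, R i → ∀ j j', C j → C j' → M i j = M i j'

def ZoneVertical {m n : ℕ} (M : Matrix (Fin m) (Fin n) (Fin 3))
    (R : Fin m → Prop) (C : Fin n → Prop) : Prop :=
  ∀ j, C j → ∀ i i', R i → R i' → M i j = M i' j

/-- A zone is mixed if it is neither horizontal nor vertical, or if it has at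
least two rows and two columns and contains a `*` (= `2`) entry. -/
def ZoneMixed {m n : ℕ} (M : Matrix (Fin m) (Fin n) (Fin 3))
    (R : Fin m → Prop) (C : Fin n → Prop) : Prop :=
  (¬ ZoneHorizontal M R C ∧ ¬ ZoneVertical M R C) ∨
    ((∃ i i', R i ∧ R i' ∧ i ≠ i') ∧ (∃ j j', C j ∧ C j' ∧ j ≠ j') ∧
      ∃ i j, R i ∧ C j ∧ M i j = 2)

/-- A matrix has a `d`-almost mixed minor if it has a `d`-division (monotone
surjective block maps on rows and columns) all of whose off-diagonal zones are
mixed. -/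
def HasAlmostMixedMinor {n : ℕ} (M : Matrix (Fin n) (Fin n) (Fin 3)) (d : ℕ) : Prop :=
  ∃ (r : Fin n → Fin d) (c : Fin n → Fin d),
    Monotone r ∧ Monotone c ∧ Function.Surjective r ∧ Function.Surjective c ∧
    ∀ i j : Fin d, i ≠ j → ZoneMixed M (fun x => r x = i) (fun y => c y = j)

open Classical in
/-- The adjacency matrix of the graph `G` under the vertex ordering
`σ 0, σ 1, …`, with `*` (= `2`) on the diagonal. -/
noncomputable def adjMat {n : ℕ} (G : SimpleGraph (Fin n)) (σ : Equiv.Perm (Fin n)) :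
    Matrix (Fin n) (Fin n) (Fin 3) :=
  fun i j => if i = j then 2 else if G.Adj (σ i) (σ j) then 1 else 0

/-- A graph is `d`-almost mixed free if its vertices can be ordered so that its
adjacency matrix has no `d`-almost mixed minor. -/
def AlmostMixedFree {n : ℕ} (G : SimpleGraph (Fin n)) (d : ℕ) : Prop :=
  ∃ σ : Equiv.Perm (Fin n), ¬ HasAlmostMixedMinor (adjMat G σ) d

/-!
Order the four vertices of an induced `P₄` by their positions and cut rows and columns between
the second and the third. Both off-diagonal zones of this 2-division contain the adjacency matrix
between the first two and the last two vertices, and however `P₄` is split into two pairs, this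
`2 × 2` matrix has a non-constant row and a non-constant column.

For `χ = ω`, remove a maximal independent set `I`. In a `P₄`-free graph the neighbourhoods in a
clique `K` of two non-adjacent vertices are nested, and every vertex of `K` outside `I` has a
neighbour in `I`; so some vertex of `I` sees all of `K`, the clique number drops when `I` is
removed, and induction colours the graph with `ω` colours.
-/

open SimpleGraph

namespace SimpleGraph

variable {V : Type*} {G : SimpleGraph V}

lemma pathGraph_four_isIndContained {a b c d : V} (hab : G.Adj a b) (hbc : G.Adj b c)
    (hcd : G.Adj c d) (hac : ¬ G.Adj a c) (had : ¬ G.Adj a d) (hbd : ¬ G.Adj b d) :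
    pathGraph 4 ⊴ G := by
  have hac' : a ≠ c := by rintro rfl; exact had hcd
  have had' : a ≠ d := by rintro rfl; exact hac hcd.symm
  have hbd' : b ≠ d := by rintro rfl; exact had hab
  refine ⟨⟨⟨![a, b, c, d], fun i j hij => ?_⟩, fun {i j} => ?_⟩⟩
  · fin_cases i <;> fin_cases j <;> simp_all [hab.ne, hbc.ne, hcd.ne, eq_comm]
  · change G.Adj (![a, b, c, d] i) (![a, b, c, d] j) ↔ _
    fin_cases i <;> fin_cases j <;> simp_all [pathGraph_adj, G.adj_comm]

lemma adj_or_adj_of_not_pathGraph_four_isIndContained (hG : ¬ pathGraph 4 ⊴ G) {i i' k k' : V}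
    (hii' : ¬ G.Adj i i') (hkk' : G.Adj k k') (hik : G.Adj i k) (hi'k' : G.Adj i' k') :
    G.Adj i k' ∨ G.Adj i' k := by
  by_contra! h
  exact hG (pathGraph_four_isIndContained hik hkk' hi'k'.symm h.1 hii' fun h' => h.2 h'.symm)

lemma exists_adj_of_maximal_isIndepSet {I : Set V} (hI : Maximal G.IsIndepSet I) {v : V}
    (hv : v ∉ I) : ∃ i ∈ I, G.Adj i v := by
  by_contra! h
  refine hv (hI.mem_of_prop_insert ?_)
  exact Set.pairwise_insert.2 ⟨hI.1, fun i hi _ => ⟨fun hvi => h i hi hvi.symm, h i hi⟩⟩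

lemma exists_forall_adj_of_maximal_isIndepSet [Finite V] (hG : ¬ pathGraph 4 ⊴ G)
    {I : Set V} (hI : Maximal G.IsIndepSet I) (hI₀ : I.Nonempty) {K : Set V}
    (hK : G.IsClique K) (hKI : Disjoint K I) : ∃ i ∈ I, ∀ k ∈ K, G.Adj i k := by
  obtain ⟨i, ⟨hi, hmax⟩⟩ :=
    I.toFinite.exists_maximalFor (fun i => {k ∈ K | G.Adj i k}) I hI₀
  refine ⟨i, hi, fun k hk => ?_⟩
  by_contra hik
  obtain ⟨i', hi', hi'k⟩ := exists_adj_of_maximal_isIndepSet hI (hKI.notMem_of_mem_left hk)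
  have hii' : ¬ G.Adj i i' := fun h => hI.1 hi hi' h.ne h
  have hsub : {k' ∈ K | G.Adj i k'} ⊆ {k' ∈ K | G.Adj i' k'} := by
    rintro k' ⟨hk', hik'⟩
    refine ⟨hk', ?_⟩
    obtain rfl | hkk' := eq_or_ne k' k
    · exact hi'k
    · exact (adj_or_adj_of_not_pathGraph_four_isIndContained hG hii' (hK hk' hk hkk') hik'
        hi'k).resolve_left hik
  exact hik (hmax hi' hsub ⟨hk, hi'k⟩).2

lemma cliqueNum_induce_compl_lt [Finite V] [Nonempty V] (hG : ¬ pathGraph 4 ⊴ G)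
    {I : Set V} (hI : Maximal G.IsIndepSet I) : (G.induce Iᶜ).cliqueNum < G.cliqueNum := by
  classical
  have hI₀ : I.Nonempty := by
    obtain ⟨v⟩ := ‹Nonempty V›
    by_cases hv : v ∈ I
    · exact ⟨v, hv⟩
    · obtain ⟨i, hi, -⟩ := exists_adj_of_maximal_isIndepSet hI hv
      exact ⟨i, hi⟩
  obtain ⟨s, hs⟩ := (G.induce Iᶜ).exists_isNClique_cliqueNum
  rw [isNClique_induce_iff] at hs
  set K := s.map (.subtype _)
  have hKI : Disjoint (K : Set V) I := by
    rw [Set.disjoint_right]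
    intro v hv hvK
    obtain ⟨⟨w, hw⟩, -, rfl⟩ := Finset.mem_map.1 hvK
    exact hw hv
  obtain ⟨i, hi, hiK⟩ := exists_forall_adj_of_maximal_isIndepSet hG hI hI₀ hs.isClique hKI
  have hclique := hs.insert fun k hk => hiK k hk
  have := hclique.isClique.card_le_cliqueNum
  rw [hclique.card_eq] at this
  omega

lemma colorable_succ_of_isIndepSet {I : Set V} (hI : G.IsIndepSet I) {k : ℕ}
    (hc : (G.induce Iᶜ).Colorable k) : G.Colorable (k + 1) := by
  classical
  obtain ⟨c⟩ := hc
  refine ⟨Coloring.mk (fun v => if hv : v ∈ I then Fin.last k else (c ⟨v, hv⟩).castSucc) ?_⟩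
  intro v w hvw
  by_cases hv : v ∈ I <;> by_cases hw : w ∈ I <;> simp only [hv, hw, dite_true, dite_false]
  · exact (hI hv hw hvw.ne hvw).elim
  · exact (Fin.castSucc_lt_last _).ne'
  · exact (Fin.castSucc_lt_last _).ne
  · exact fun h => c.valid (show (G.induce Iᶜ).Adj ⟨v, hv⟩ ⟨w, hw⟩ from hvw) (Fin.castSucc_inj.1 h)

theorem colorable_of_cliqueNum_le [Finite V] (hG : ¬ pathGraph 4 ⊴ G) {k : ℕ}
    (hk : G.cliqueNum ≤ k) : G.Colorable k := by
  induction k generalizing V with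
  | zero =>
    refine colorable_zero_iff.2 ⟨fun v => ?_⟩
    have := IsClique.card_le_cliqueNum (G := G) (t := {v}) (tc := by simp)
    simp_all
  | succ k ih =>
    cases isEmpty_or_nonempty V
    · exact .of_isEmpty _
    obtain ⟨I, -, hI⟩ := Finite.exists_le_maximal (p := G.IsIndepSet) (a := ∅) (by simp)
    refine colorable_succ_of_isIndepSet hI.1 (ih ?_ ?_)
    · exact fun h => hG (h.trans ⟨Embedding.induce _⟩)
    · have := cliqueNum_induce_compl_lt hG hI
      omega

theorem chromaticNumber_eq_cliqueNum [Finite V] (hG : ¬ pathGraph 4 ⊴ G) :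
    G.chromaticNumber = G.cliqueNum :=
  (colorable_of_cliqueNum_le hG le_rfl).chromaticNumber_le.antisymm G.cliqueNum_le_chromaticNumber

end SimpleGraph

section AlmostMixedMinor

variable {n : ℕ}

lemma ZoneMixed.symm {M : Matrix (Fin n) (Fin n) (Fin 3)} (hM : M.IsSymm) {R C : Fin n → Prop}
    (h : ZoneMixed M R C) : ZoneMixed M C R := by
  rcases h with ⟨hH, hV⟩ | ⟨hR, hC, i, j, hi, hj, hij⟩
  · refine Or.inl ⟨fun H => hV fun j hj i i' hi hi' => ?_, fun H => hH fun i hi j j' hj hj' => ?_⟩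
    · exact (hM.apply i j).symm.trans ((H j hj i i' hi hi').trans (hM.apply i' j))
    · exact (hM.apply i j).symm.trans ((H i hi j j' hj hj').trans (hM.apply i j'))
  · exact Or.inr ⟨hC, hR, j, i, hj, hi, hM.apply i j ▸ hij⟩

lemma hasAlmostMixedMinor_two_of_isSymm {M : Matrix (Fin n) (Fin n) (Fin 3)} (hM : M.IsSymm)
    {r : Fin n → Fin 2} (hr : Monotone r) (hr' : Function.Surjective r)
    (h : ZoneMixed M (r · = 0) (r · = 1)) : HasAlmostMixedMinor M 2 := by
  refine ⟨r, r, hr, hr, hr', hr', fun i j hij => ?_⟩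
  fin_cases i <;> fin_cases j
  exacts [absurd rfl hij, h, h.symm hM, absurd rfl hij]

lemma hasAlmostMixedMinor_two_of_crossing_pairs {M : Matrix (Fin n) (Fin n) (Fin 3)}
    (hM : M.IsSymm) {a b c d : Fin n} (hab : a ≤ b) (hbc : b < c) (hcd : c ≤ d)
    (hrow : M a c ≠ M a d ∨ M b c ≠ M b d) (hcol : M a c ≠ M b c ∨ M a d ≠ M b d) :
    HasAlmostMixedMinor M 2 := by
  set r : Fin n → Fin 2 := fun x => if x ≤ b then 0 else 1
  have hr0 : ∀ {x}, x ≤ b → r x = 0 := fun h => if_pos h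
  have hr1 : ∀ {x}, b < x → r x = 1 := fun h => if_neg (not_le.2 h)
  have hmono : Monotone r := by
    intro x y hxy
    by_cases hy : y ≤ b
    · rw [hr0 (hxy.trans hy), hr0 hy]
    · rw [hr1 (not_le.1 hy)]
      exact Fin.le_last _
  have hsurj : Function.Surjective r := fun i => by
    fin_cases i
    exacts [⟨b, hr0 le_rfl⟩, ⟨c, hr1 hbc⟩]
  refine hasAlmostMixedMinor_two_of_isSymm hM hmono hsurj (Or.inl ⟨fun H => ?_, fun H => ?_⟩)
  · have hc := hr1 hbc
    have hd := hr1 (hbc.trans_le hcd)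
    exact hrow.elim (· (H a (hr0 hab) c d hc hd)) (· (H b (hr0 le_rfl) c d hc hd))
  · have ha := hr0 hab
    have hb := hr0 le_rfl
    exact hcol.elim (· (H c (hr1 hbc) a b ha hb)) (· (H d (hr1 (hbc.trans_le hcd)) a b ha hb))

lemma adjMat_isSymm (G : SimpleGraph (Fin n)) (σ : Equiv.Perm (Fin n)) :
    (adjMat G σ).IsSymm := by
  ext i j
  by_cases h : i = j
  · subst h; rfl
  · simp only [Matrix.transpose_apply, adjMat, if_neg h, if_neg (Ne.symm h)]
    rw [G.adj_comm]

open Classical in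
lemma adjMat_apply_of_ne (G : SimpleGraph (Fin n)) (σ : Equiv.Perm (Fin n)) {i j : Fin n}
    (h : i ≠ j) : adjMat G σ i j = if G.Adj (σ i) (σ j) then 1 else 0 :=
  if_neg h

lemma ite_eq_ite_iff_of_ne {α : Type*} {a b : α} (hab : a ≠ b) {P Q : Prop} [Decidable P]
    [Decidable Q] : ((if P then a else b) = if Q then a else b) ↔ (P ↔ Q) := by
  by_cases hP : P <;> by_cases hQ : Q <;> simp [hP, hQ, hab, hab.symm]

lemma pathGraph_four_split (τ : Equiv.Perm (Fin 4)) :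
    let A := fun i j => (pathGraph 4).Adj (τ i) (τ j)
    (¬ (A 0 2 ↔ A 0 3) ∨ ¬ (A 1 2 ↔ A 1 3)) ∧ (¬ (A 0 2 ↔ A 1 2) ∨ ¬ (A 0 3 ↔ A 1 3)) := by
  revert τ
  simp only [pathGraph_adj]
  decide

lemma hasAlmostMixedMinor_adjMat_of_pathGraph_four_isIndContained {G : SimpleGraph (Fin n)}
    (σ : Equiv.Perm (Fin n)) (hG : pathGraph 4 ⊴ G) : HasAlmostMixedMinor (adjMat G σ) 2 := by
  classical
  obtain ⟨φ⟩ := hG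
  set p : Fin 4 → Fin n := fun i => σ.symm (φ i)
  set τ := Tuple.sort p
  have hq : StrictMono (p ∘ τ) := (Tuple.monotone_sort p).strictMono_of_injective
    ((σ.symm.injective.comp φ.injective).comp τ.injective)
  have hentry : ∀ i j, i ≠ j →
      adjMat G σ (p (τ i)) (p (τ j)) = if (pathGraph 4).Adj (τ i) (τ j) then 1 else 0 := by
    intro i j hij
    refine (adjMat_apply_of_ne G σ (hq.injective.ne hij : p (τ i) ≠ p (τ j))).trans ?_
    simp only [p, Function.comp_apply, Equiv.apply_symm_apply, φ.map_adj_iff]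
  obtain ⟨hrow, hcol⟩ := pathGraph_four_split τ
  refine hasAlmostMixedMinor_two_of_crossing_pairs (adjMat_isSymm G σ)
    (hq.monotone (by decide : (0 : Fin 4) ≤ 1)) (hq (by decide : (1 : Fin 4) < 2))
    (hq.monotone (by decide : (2 : Fin 4) ≤ 3)) ?_ ?_ <;>
  simpa only [Function.comp_apply, hentry _ _ (by decide : (0 : Fin 4) ≠ 2),
    hentry _ _ (by decide : (0 : Fin 4) ≠ 3), hentry _ _ (by decide : (1 : Fin 4) ≠ 2),
    hentry _ _ (by decide : (1 : Fin 4) ≠ 3), ne_eq,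
    ite_eq_ite_iff_of_ne (by decide : (1 : Fin 3) ≠ 0)]

end AlmostMixedMinor

/-- Every 2-almost-mixed free graph is a cograph (it has no induced `P₄`),
hence perfect; in particular it satisfies `χ = ω`. -/
theorem almostMixedFree_two_cograph {n : ℕ} (G : SimpleGraph (Fin n))
    (hG : AlmostMixedFree G 2) :
    (¬ ∃ a b c d : Fin n, a ≠ b ∧ a ≠ c ∧ a ≠ d ∧ b ≠ c ∧ b ≠ d ∧ c ≠ d ∧
      G.Adj a b ∧ G.Adj b c ∧ G.Adj c d ∧
      ¬ G.Adj a c ∧ ¬ G.Adj a d ∧ ¬ G.Adj b d) ∧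
    G.chromaticNumber = (G.cliqueNum : ℕ∞) := by
  obtain ⟨σ, hσ⟩ := hG
  have hP₄ : ¬ pathGraph 4 ⊴ G := fun h =>
    hσ (hasAlmostMixedMinor_adjMat_of_pathGraph_four_isIndContained σ h)
  refine ⟨?_, chromaticNumber_eq_cliqueNum hP₄⟩
  rintro ⟨a, b, c, d, -, -, -, -, -, -, hab, hbc, hcd, hac, had, hbd⟩
  exact hP₄ (pathGraph_four_isIndContained hab hbc hcd hac had hbd)
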